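/- Let n ∈ ℤ with n ≠ 0, let G be a nontrivial additive subgroup of ℂ, and let φ be a ½-derivation of the not-finitely graded Heisenberg–Witt algebra HW_n(G). Then there exists a finitely supported function a : G × ℤ → ℂ satisfying d·a(d,k) + (k−n)·a(d,k−n) = 0 for all d ∈ G and k ∈ ℤ (equivalently: a(0,k) = 0 for all k ≠ 0, a(d, k·n) = 0 for all d ≠ 0 and integers k ≥ 1, and for d ≠ 0 all a(d, t·n + m) are determined from a(d,m) by this recursion), such that φ(L_{α,i}) = Σ_{(d,k) ∈ G×ℤ} a(d,k)·L_{α+d, i+k} and φ(H_{α,i}) = Σ_{(d,k) ∈ G×ℤ} a(d,k)·H_{α+d, i+k} for all α ∈ G and i ∈ ℤ. -/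

import Mathlib

/-- Basis of the not-finitely graded Heisenberg–Witt algebra HW_n(G):
elements `L α i` and `H α i` for α ∈ G, i ∈ ℤ. -/
inductive HWBasis (G : AddSubgroup ℂ) : Type
  | L : ↥G → ℤ → HWBasis G
  | H : ↥G → ℤ → HWBasis G

/-- Underlying vector space of HW_n(G): the free ℂ-module on `HWBasis G`. -/
abbrev HWnG (G : AddSubgroup ℂ) : Type := HWBasis G →₀ ℂ

noncomputable def Lh (G : AddSubgroup ℂ) (α : ↥G) (i : ℤ) : HWnG G :=
  Finsupp.single (HWBasis.L α i) 1

noncomputable def Hh (G : AddSubgroup ℂ) (α : ↥G) (i : ℤ) : HWnG G :=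
  Finsupp.single (HWBasis.H α i) 1

/-- The Lie bracket of HW_n(G) on basis elements. -/
noncomputable def hwBracketBasis (n : ℤ) (G : AddSubgroup ℂ) :
    HWBasis G → HWBasis G → HWnG G
  | HWBasis.L α i, HWBasis.L β j =>
      ((β : ℂ) - (α : ℂ)) • Lh G (α + β) (i + j) +
        ((j : ℂ) - (i : ℂ)) • Lh G (α + β) (i + j + n)
  | HWBasis.L α i, HWBasis.H β j =>
      (β : ℂ) • Hh G (α + β) (i + j) + (j : ℂ) • Hh G (α + β) (i + j + n)
  | HWBasis.H α i, HWBasis.L β j =>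
      -((α : ℂ) • Hh G (β + α) (j + i) + (i : ℂ) • Hh G (β + α) (j + i + n))
  | HWBasis.H _ _, HWBasis.H _ _ => 0

/-- The Lie bracket of HW_n(G), extended bilinearly from the basis. -/
noncomputable def hwBracket (n : ℤ) (G : AddSubgroup ℂ) :
    HWnG G →ₗ[ℂ] HWnG G →ₗ[ℂ] HWnG G :=
  Finsupp.lift (HWnG G →ₗ[ℂ] HWnG G) ℂ (HWBasis G) fun x =>
    Finsupp.lift (HWnG G) ℂ (HWBasis G) fun y => hwBracketBasis n G x y

/-- `φ` is a ½-derivation of HW_n(G). -/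
def IsHalfDerivationHW (n : ℤ) (G : AddSubgroup ℂ) (φ : HWnG G →ₗ[ℂ] HWnG G) : Prop :=
  ∀ x y : HWnG G, φ (hwBracket n G x y) =
    (1 / 2 : ℂ) • (hwBracket n G (φ x) y + hwBracket n G x (φ y))

namespace Stmt15Aux

variable {G : AddSubgroup ℂ}

lemma br_single_single (n : ℤ) (u v : HWBasis G) :
    hwBracket n G (Finsupp.single u 1) (Finsupp.single v 1) = hwBracketBasis n G u v := by
  simp [hwBracket, Finsupp.lift_apply, Finsupp.sum_single_index]

lemma br_single_left (n : ℤ) (u : HWBasis G) (y : HWnG G) :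
    hwBracket n G (Finsupp.single u 1) y = y.sum fun v c => c • hwBracketBasis n G u v := by
  simp [hwBracket, Finsupp.lift_apply, Finsupp.sum_single_index]



lemma coeff_L_L (n : ℤ) (hn : n ≠ 0) (α δ : G) (i m : ℤ) (v : HWnG G) :
    hwBracket n G (Lh G α i) v (HWBasis.L δ m)
      = ((δ:ℂ) - 2*(α:ℂ)) * v (HWBasis.L (δ - α) (m - i))
        + ((m:ℂ) - 2*(i:ℂ) - (n:ℂ)) * v (HWBasis.L (δ - α) (m - i - n)) := by
  classical
  induction v using Finsupp.induction_linear with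
  | zero => simp
  | add f g hf hg => rw [map_add]; simp only [Finsupp.add_apply, hf, hg]; ring
  | single b r =>
    rw [show (Finsupp.single b r : HWnG G) = r • Finsupp.single b 1 by
          rw [Finsupp.smul_single, smul_eq_mul, mul_one], map_smul]
    rw [Lh, br_single_single]
    rcases b with ⟨β, k⟩ | ⟨β, k⟩
    · simp only [hwBracketBasis, Finsupp.smul_apply, Finsupp.add_apply, Lh,
        Finsupp.single_apply, HWBasis.L.injEq, smul_eq_mul]
      by_cases hG1 : α + β = δ
      · subst hG1
        simp only [add_sub_cancel_left, eq_self_iff_true, true_and]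
        split_ifs <;> first | (subst_vars; push_cast; ring1) | (exfalso; omega)
      · simp only [eq_sub_iff_add_eq', hG1, false_and, and_false, if_false]
        ring
    · simp only [hwBracketBasis, Finsupp.smul_apply, Finsupp.add_apply, Hh,
        Finsupp.single_apply, smul_eq_mul]
      simp

lemma coeff_L_H (n : ℤ) (hn : n ≠ 0) (α δ : G) (i m : ℤ) (v : HWnG G) :
    hwBracket n G (Lh G α i) v (HWBasis.H δ m)
      = ((δ:ℂ) - (α:ℂ)) * v (HWBasis.H (δ - α) (m - i))
        + ((m:ℂ) - (i:ℂ) - (n:ℂ)) * v (HWBasis.H (δ - α) (m - i - n)) := by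
  classical
  induction v using Finsupp.induction_linear with
  | zero => simp
  | add f g hf hg => rw [map_add]; simp only [Finsupp.add_apply, hf, hg]; ring
  | single b r =>
    rw [show (Finsupp.single b r : HWnG G) = r • Finsupp.single b 1 by
          rw [Finsupp.smul_single, smul_eq_mul, mul_one], map_smul]
    rw [Lh, br_single_single]
    rcases b with ⟨β, k⟩ | ⟨β, k⟩
    · simp only [hwBracketBasis, Finsupp.smul_apply, Finsupp.add_apply, Lh,
        Finsupp.single_apply, smul_eq_mul]
      simp
    · simp only [hwBracketBasis, Finsupp.smul_apply, Finsupp.add_apply, Hh,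
        Finsupp.single_apply, HWBasis.H.injEq, smul_eq_mul]
      by_cases hG1 : α + β = δ
      · subst hG1
        simp only [add_sub_cancel_left, eq_self_iff_true, true_and]
        split_ifs <;> first | (subst_vars; push_cast; ring1) | (exfalso; omega)
      · simp only [eq_sub_iff_add_eq', hG1, false_and, and_false, if_false]
        ring

lemma coeff_H_L (n : ℤ) (α δ : G) (i m : ℤ) (v : HWnG G) :
    hwBracket n G (Hh G α i) v (HWBasis.L δ m) = 0 := by
  classical
  induction v using Finsupp.induction_linear with
  | zero => simp
  | add f g hf hg => rw [map_add]; simp only [Finsupp.add_apply, hf, hg]; ring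
  | single b r =>
    rw [show (Finsupp.single b r : HWnG G) = r • Finsupp.single b 1 by
          rw [Finsupp.smul_single, smul_eq_mul, mul_one], map_smul]
    rw [Hh, br_single_single]
    rcases b with ⟨β, k⟩ | ⟨β, k⟩ <;>
      simp [hwBracketBasis, Hh, Finsupp.single_apply]

lemma coeff_H_H (n : ℤ) (hn : n ≠ 0) (α δ : G) (i m : ℤ) (v : HWnG G) :
    hwBracket n G (Hh G α i) v (HWBasis.H δ m)
      = -((α:ℂ) * v (HWBasis.L (δ - α) (m - i))
          + (i:ℂ) * v (HWBasis.L (δ - α) (m - i - n))) := by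
  classical
  induction v using Finsupp.induction_linear with
  | zero => simp
  | add f g hf hg => rw [map_add]; simp only [Finsupp.add_apply, hf, hg]; ring
  | single b r =>
    rw [show (Finsupp.single b r : HWnG G) = r • Finsupp.single b 1 by
          rw [Finsupp.smul_single, smul_eq_mul, mul_one], map_smul]
    rw [Hh, br_single_single]
    rcases b with ⟨β, k⟩ | ⟨β, k⟩
    · simp only [hwBracketBasis, Finsupp.smul_apply, Finsupp.neg_apply, Finsupp.add_apply, Hh,
        Finsupp.single_apply, HWBasis.H.injEq, smul_eq_mul, Lh, HWBasis.L.injEq]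
      by_cases hG1 : β = δ - α
      · subst hG1
        simp only [sub_add_cancel, eq_self_iff_true, true_and]
        split_ifs <;> first | (subst_vars; push_cast; ring1) | (exfalso; omega)
      · have hG2 : ¬ (β + α = δ) := fun hc => hG1 (eq_sub_iff_add_eq.mpr hc)
        simp only [hG1, hG2, false_and, and_false, if_false]
        ring
    · simp [hwBracketBasis, Lh, Finsupp.single_apply]

lemma basis_antisymm (n : ℤ) (u v : HWBasis G) :
    hwBracketBasis n G u v = - hwBracketBasis n G v u := by
  rcases u with ⟨α, i⟩ | ⟨α, i⟩ <;> rcases v with ⟨β, j⟩ | ⟨β, j⟩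
  · simp only [hwBracketBasis, neg_add_rev, ← neg_smul, neg_neg, neg_sub]
    rw [add_comm β α, add_comm j i]
    abel
  · simp only [hwBracketBasis, neg_add_rev, ← neg_smul, neg_neg, neg_sub]
  · simp only [hwBracketBasis, neg_add_rev, ← neg_smul, neg_neg, neg_sub]
  · simp [hwBracketBasis]

lemma br_antisymm (n : ℤ) (x y : HWnG G) :
    hwBracket n G x y = - hwBracket n G y x := by
  classical
  induction x using Finsupp.induction_linear with
  | zero => simp
  | add f g hf hg => simp only [map_add, LinearMap.add_apply, hf, hg]; abel
  | single a r =>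
    induction y using Finsupp.induction_linear with
    | zero => simp
    | add f g hf hg => simp only [map_add, LinearMap.add_apply, hf, hg,
        LinearMap.map_add]; abel
    | single b s =>
      rw [show (Finsupp.single a r : HWnG G) = r • Finsupp.single a 1 by
            rw [Finsupp.smul_single, smul_eq_mul, mul_one],
          show (Finsupp.single b s : HWnG G) = s • Finsupp.single b 1 by
            rw [Finsupp.smul_single, smul_eq_mul, mul_one]]
      simp only [map_smul, LinearMap.smul_apply, br_single_single, LinearMap.map_smul]
      rw [basis_antisymm]
      simp [smul_comm r s]

lemma coeff_v_L (n : ℤ) (hn : n ≠ 0) (β δ : G) (j m : ℤ) (v : HWnG G) :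
    hwBracket n G v (Lh G β j) (HWBasis.L δ m)
      = -(((δ:ℂ) - 2*(β:ℂ)) * v (HWBasis.L (δ - β) (m - j))
          + ((m:ℂ) - 2*(j:ℂ) - (n:ℂ)) * v (HWBasis.L (δ - β) (m - j - n))) := by
  rw [br_antisymm, Finsupp.neg_apply, coeff_L_L n hn]

lemma coeff_v_LH (n : ℤ) (hn : n ≠ 0) (β δ : G) (j m : ℤ) (v : HWnG G) :
    hwBracket n G v (Lh G β j) (HWBasis.H δ m)
      = -(((δ:ℂ) - (β:ℂ)) * v (HWBasis.H (δ - β) (m - j))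
          + ((m:ℂ) - (j:ℂ) - (n:ℂ)) * v (HWBasis.H (δ - β) (m - j - n))) := by
  rw [br_antisymm, Finsupp.neg_apply, coeff_L_H n hn]

lemma coeff_v_HL (n : ℤ) (β δ : G) (j m : ℤ) (v : HWnG G) :
    hwBracket n G v (Hh G β j) (HWBasis.L δ m) = 0 := by
  rw [br_antisymm, Finsupp.neg_apply, coeff_H_L n, neg_zero]

lemma coeff_v_HH (n : ℤ) (hn : n ≠ 0) (β δ : G) (j m : ℤ) (v : HWnG G) :
    hwBracket n G v (Hh G β j) (HWBasis.H δ m)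
      = (β:ℂ) * v (HWBasis.L (δ - β) (m - j))
          + (j:ℂ) * v (HWBasis.L (δ - β) (m - j - n)) := by
  rw [br_antisymm, Finsupp.neg_apply, coeff_H_H n hn]
  ring


noncomputable def FF (φ : HWnG G →ₗ[ℂ] HWnG G) (γ : G) (k : ℤ) (δ : G) (m : ℤ) : ℂ :=
  φ (Lh G γ k) (HWBasis.L δ m)
noncomputable def WW (φ : HWnG G →ₗ[ℂ] HWnG G) (γ : G) (k : ℤ) (δ : G) (m : ℤ) : ℂ :=
  φ (Lh G γ k) (HWBasis.H δ m)
noncomputable def PP (φ : HWnG G →ₗ[ℂ] HWnG G) (γ : G) (k : ℤ) (δ : G) (m : ℤ) : ℂ :=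
  φ (Hh G γ k) (HWBasis.L δ m)
noncomputable def QQ (φ : HWnG G →ₗ[ℂ] HWnG G) (γ : G) (k : ℤ) (δ : G) (m : ℤ) : ℂ :=
  φ (Hh G γ k) (HWBasis.H δ m)

lemma br_LL (n : ℤ) (α β : G) (i j : ℤ) :
    hwBracket n G (Lh G α i) (Lh G β j)
      = ((β:ℂ) - α) • Lh G (α+β) (i+j) + ((j:ℂ) - i) • Lh G (α+β) (i+j+n) := by
  rw [Lh, Lh, br_single_single]; rfl

lemma br_LHh (n : ℤ) (α β : G) (i j : ℤ) :
    hwBracket n G (Lh G α i) (Hh G β j)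
      = (β:ℂ) • Hh G (α+β) (i+j) + (j:ℂ) • Hh G (α+β) (i+j+n) := by
  rw [Lh, Hh, br_single_single]; rfl

lemma br_HL (n : ℤ) (α β : G) (i j : ℤ) :
    hwBracket n G (Hh G α i) (Lh G β j)
      = -((α:ℂ) • Hh G (β+α) (j+i) + (i:ℂ) • Hh G (β+α) (j+i+n)) := by
  rw [Lh, Hh, br_single_single]; rfl

lemma br_HH (n : ℤ) (α β : G) (i j : ℤ) :
    hwBracket n G (Hh G α i) (Hh G β j) = 0 := by
  rw [Hh, Hh, br_single_single]; rfl

variable {n : ℤ} {φ : HWnG G →ₗ[ℂ] HWnG G}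

lemma M1 (hn : n ≠ 0) (hφ : IsHalfDerivationHW n G φ) (α β δ : G) (i j m : ℤ) :
    2*((β:ℂ)-α) * FF φ (α+β) (i+j) δ m + 2*((j:ℂ)-i) * FF φ (α+β) (i+j+n) δ m
      = -(((δ:ℂ)-2*β) * FF φ α i (δ-β) (m-j) + ((m:ℂ)-2*j-n) * FF φ α i (δ-β) (m-j-n))
        + ((δ:ℂ)-2*α) * FF φ β j (δ-α) (m-i) + ((m:ℂ)-2*i-n) * FF φ β j (δ-α) (m-i-n) := by
  have h := hφ (Lh G α i) (Lh G β j)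
  rw [br_LL] at h
  have h2 := congrArg (fun v : HWnG G => v (HWBasis.L δ m)) h
  simp only [map_add, map_smul, Finsupp.add_apply, Finsupp.smul_apply, smul_eq_mul] at h2
  rw [coeff_v_L n hn, coeff_L_L n hn] at h2
  simp only [FF]
  linear_combination (2:ℂ) * h2

lemma M2 (hn : n ≠ 0) (hφ : IsHalfDerivationHW n G φ) (α β δ : G) (i j m : ℤ) :
    2*((β:ℂ)-α) * WW φ (α+β) (i+j) δ m + 2*((j:ℂ)-i) * WW φ (α+β) (i+j+n) δ m
      = -(((δ:ℂ)-β) * WW φ α i (δ-β) (m-j) + ((m:ℂ)-j-n) * WW φ α i (δ-β) (m-j-n))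
        + ((δ:ℂ)-α) * WW φ β j (δ-α) (m-i) + ((m:ℂ)-i-n) * WW φ β j (δ-α) (m-i-n) := by
  have h := hφ (Lh G α i) (Lh G β j)
  rw [br_LL] at h
  have h2 := congrArg (fun v : HWnG G => v (HWBasis.H δ m)) h
  simp only [map_add, map_smul, Finsupp.add_apply, Finsupp.smul_apply, smul_eq_mul] at h2
  rw [coeff_v_LH n hn, coeff_L_H n hn] at h2
  simp only [WW]
  linear_combination (2:ℂ) * h2

lemma M3 (hn : n ≠ 0) (hφ : IsHalfDerivationHW n G φ) (α β δ : G) (i j m : ℤ) :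
    2*(β:ℂ) * PP φ (α+β) (i+j) δ m + 2*(j:ℂ) * PP φ (α+β) (i+j+n) δ m
      = ((δ:ℂ)-2*α) * PP φ β j (δ-α) (m-i) + ((m:ℂ)-2*i-n) * PP φ β j (δ-α) (m-i-n) := by
  have h := hφ (Lh G α i) (Hh G β j)
  rw [br_LHh] at h
  have h2 := congrArg (fun v : HWnG G => v (HWBasis.L δ m)) h
  simp only [map_add, map_smul, Finsupp.add_apply, Finsupp.smul_apply, smul_eq_mul] at h2
  rw [coeff_v_HL n, coeff_L_L n hn] at h2
  simp only [PP]
  linear_combination (2:ℂ) * h2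

lemma M4 (hn : n ≠ 0) (hφ : IsHalfDerivationHW n G φ) (α β δ : G) (i j m : ℤ) :
    2*(β:ℂ) * QQ φ (α+β) (i+j) δ m + 2*(j:ℂ) * QQ φ (α+β) (i+j+n) δ m
      = (β:ℂ) * FF φ α i (δ-β) (m-j) + (j:ℂ) * FF φ α i (δ-β) (m-j-n)
        + ((δ:ℂ)-α) * QQ φ β j (δ-α) (m-i) + ((m:ℂ)-i-n) * QQ φ β j (δ-α) (m-i-n) := by
  have h := hφ (Lh G α i) (Hh G β j)
  rw [br_LHh] at h
  have h2 := congrArg (fun v : HWnG G => v (HWBasis.H δ m)) h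
  simp only [map_add, map_smul, Finsupp.add_apply, Finsupp.smul_apply, smul_eq_mul] at h2
  rw [coeff_v_HH n hn, coeff_L_H n hn] at h2
  simp only [QQ, FF]
  linear_combination (2:ℂ) * h2

lemma M5 (hn : n ≠ 0) (hφ : IsHalfDerivationHW n G φ) (α β δ : G) (i j m : ℤ) :
    -(2*(α:ℂ)) * QQ φ (β+α) (j+i) δ m - 2*(i:ℂ) * QQ φ (β+α) (j+i+n) δ m
      = -(((δ:ℂ)-β) * QQ φ α i (δ-β) (m-j) + ((m:ℂ)-j-n) * QQ φ α i (δ-β) (m-j-n))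
        - ((α:ℂ) * FF φ β j (δ-α) (m-i) + (i:ℂ) * FF φ β j (δ-α) (m-i-n)) := by
  have h := hφ (Hh G α i) (Lh G β j)
  rw [br_HL] at h
  have h2 := congrArg (fun v : HWnG G => v (HWBasis.H δ m)) h
  simp only [map_add, map_smul, map_neg, Finsupp.add_apply, Finsupp.smul_apply,
    Finsupp.neg_apply, smul_eq_mul] at h2
  rw [coeff_v_LH n hn, coeff_H_H n hn] at h2
  simp only [QQ, FF]
  linear_combination (2:ℂ) * h2

lemma M6 (hn : n ≠ 0) (hφ : IsHalfDerivationHW n G φ) (α β δ : G) (i j m : ℤ) :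
    0 = (β:ℂ) * PP φ α i (δ-β) (m-j) + (j:ℂ) * PP φ α i (δ-β) (m-j-n)
        - ((α:ℂ) * PP φ β j (δ-α) (m-i) + (i:ℂ) * PP φ β j (δ-α) (m-i-n)) := by
  have h := hφ (Hh G α i) (Hh G β j)
  rw [br_HH] at h
  have h2 := congrArg (fun v : HWnG G => v (HWBasis.H δ m)) h
  simp only [map_zero, Finsupp.add_apply, Finsupp.smul_apply, Finsupp.zero_apply,
    smul_eq_mul] at h2
  rw [coeff_v_HH n hn, coeff_H_H n hn] at h2
  simp only [PP]
  linear_combination (2:ℂ) * h2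


lemma chain_zero (u : ℤ → ℂ) (hfin : {m : ℤ | u m ≠ 0}.Finite) (s : ℤ) (hs : s ≠ 0)
    (h : ∀ m, u m ≠ 0 → u (m + s) ≠ 0) : ∀ m, u m = 0 := by
  by_contra hc
  push_neg at hc
  obtain ⟨m₀, hm₀⟩ := hc
  have key : ∀ t : ℕ, u (m₀ + t * s) ≠ 0 := by
    intro t
    induction t with
    | zero => simpa using hm₀
    | succ t ih =>
      have := h _ ih
      have e : m₀ + t * s + s = m₀ + (t+1 : ℕ) * s := by push_cast; ring
      rwa [e] at this
  apply hfin.not_infinite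
  refine Set.infinite_of_injective_forall_mem (f := fun t : ℕ => m₀ + t * s) ?_ ?_
  · intro a b hab
    simp only [add_right_inj] at hab
    have : (a : ℤ) = b := mul_right_cancel₀ hs hab
    exact_mod_cast this
  · intro t
    exact key t

lemma row_finite (v : HWnG G) (f : ℤ → HWBasis G) (hf : Function.Injective f) :
    {m : ℤ | v (f m) ≠ 0}.Finite := by
  have : {m : ℤ | v (f m) ≠ 0} ⊆ f ⁻¹' (↑v.support) := by
    intro m hm
    simp only [Set.mem_preimage, Finset.mem_coe, Finsupp.mem_support_iff]
    exact hm
  exact (v.support.finite_toSet.preimage (hf.injOn)).subset this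

lemma L_inj (δ : G) : Function.Injective (fun m : ℤ => (HWBasis.L δ m : HWBasis G)) := by
  intro a b hab
  exact (HWBasis.L.injEq _ _ _ _ ▸ hab : (δ = δ ∧ a = b)).2

lemma H_inj (δ : G) : Function.Injective (fun m : ℤ => (HWBasis.H δ m : HWBasis G)) := by
  intro a b hab
  exact (HWBasis.H.injEq _ _ _ _ ▸ hab : (δ = δ ∧ a = b)).2

lemma exists_ne_zero {G : AddSubgroup ℂ} (hG : G ≠ ⊥) : ∃ ε : G, (ε : ℂ) ≠ 0 := by
  by_contra hc
  push_neg at hc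
  apply hG
  ext x
  simp only [AddSubgroup.mem_bot]
  constructor
  · intro hx
    exact hc ⟨x, hx⟩
  · rintro rfl
    exact G.zero_mem


lemma coe_ne {a b : G} (h : a ≠ b) : (a : ℂ) ≠ (b : ℂ) := fun hc => h (Subtype.ext hc)

lemma chain_zero_down (u : ℤ → ℂ) (hfin : {m : ℤ | u m ≠ 0}.Finite) {n : ℤ} (hn : n ≠ 0)
    (h : ∀ m, u m ≠ 0 → u (m - n) ≠ 0) : ∀ m, u m = 0 := by
  refine chain_zero u hfin (-n) (neg_ne_zero.mpr hn) ?_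
  intro m hm
  rw [← sub_eq_add_neg]
  exact h m hm

lemma finP (φ : HWnG G →ₗ[ℂ] HWnG G) (γ δ : G) (k : ℤ) :
    {m : ℤ | PP φ γ k δ m ≠ 0}.Finite :=
  row_finite (φ (Hh G γ k)) _ (L_inj δ)

lemma step_P (hn : n ≠ 0) (hφ : IsHalfDerivationHW n G φ) (ε : G) (hε : (ε : ℂ) ≠ 0) :
    ∀ γ k δ m, PP φ γ k δ m = 0 := by
  -- basic recursion for PP σ 0
  have hPA : ∀ σ : G, ∀ δ : G, ∀ m : ℤ,
      (2*(σ:ℂ) - δ) * PP φ σ 0 δ m = ((m:ℂ) - n) * PP φ σ 0 δ (m - n) := by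
    intro σ δ m
    have h := M3 hn hφ 0 σ δ 0 0 m
    simp only [zero_add, add_zero, sub_zero, ZeroMemClass.coe_zero] at h
    linear_combination h
  -- rows with δ ≠ σ + σ vanish
  have hProw : ∀ σ : G, (σ:ℂ) ≠ 0 → ∀ δ : G, δ ≠ σ + σ → ∀ m, PP φ σ 0 δ m = 0 := by
    intro σ hσ δ hδ
    refine chain_zero_down (fun m => PP φ σ 0 δ m) (finP φ σ δ 0) hn ?_
    intro m hm
    intro hc
    have h := hPA σ δ m
    rw [hc, mul_zero] at h
    have hcoef : 2*(σ:ℂ) - δ ≠ 0 := by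
      have : (δ:ℂ) ≠ ((σ + σ : G) : ℂ) := coe_ne hδ
      push_cast at this
      intro h0
      apply this
      linear_combination -h0
    exact hm (by
      have := mul_eq_zero.mp h
      rcases this with h1 | h1
      · exact absurd h1 hcoef
      · exact h1)
  -- diagonal row δ = σ + σ : only m = 0 can be nonzero
  have hPdiag : ∀ σ : G, ∀ m : ℤ, m ≠ 0 → PP φ σ 0 (σ + σ) m = 0 := by
    intro σ m hm
    have h := hPA σ (σ + σ) (m + n)
    have hc : 2*(σ:ℂ) - ((σ+σ : G):ℂ) = 0 := by push_cast; ring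
    rw [hc, zero_mul] at h
    have h2 : ((m:ℂ) + n - n) = (m:ℂ) := by ring
    rw [show ((m + n : ℤ):ℂ) = (m:ℂ) + n by push_cast; ring, h2,
      show m + n - n = m by ring] at h
    have hm' : ((m:ℂ)) ≠ 0 := by exact_mod_cast hm
    rcases mul_eq_zero.mp h.symm with h1 | h1
    · exact absurd h1 hm'
    · exact h1
  -- and also m = 0 vanishes
  have hPzero : ∀ σ : G, (σ:ℂ) ≠ 0 → PP φ σ 0 (σ + σ) 0 = 0 := by
    intro σ hσ
    have h := M3 hn hφ σ σ (σ + σ + σ) 0 0 0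
    simp only [add_zero, sub_zero] at h
    have e1 : σ + σ + σ - σ = σ + σ := by abel
    rw [e1] at h
    have e2 : PP φ (σ + σ) 0 (σ + σ + σ) 0 = 0 := by
      apply hProw (σ + σ) (by push_cast; intro hc; apply hσ; linear_combination hc/2)
      · intro hc
        have := congrArg (fun x : G => (x : ℂ)) hc
        push_cast at this
        exact hσ (by linear_combination -this)
      
    have e3 : PP φ σ 0 (σ + σ) (0 - n) = 0 := hPdiag σ (0 - n) (by omega)
    rw [e2, e3] at h
    push_cast at h
    have : (σ:ℂ) * PP φ σ 0 (σ + σ) 0 = 0 := by linear_combination -h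
    rcases mul_eq_zero.mp this with h1 | h1
    · exact absurd h1 hσ
    · exact h1
  have hPfull : ∀ σ : G, (σ:ℂ) ≠ 0 → ∀ δ m, PP φ σ 0 δ m = 0 := by
    intro σ hσ δ m
    by_cases hδ : δ = σ + σ
    · subst hδ
      by_cases hm : m = 0
      · subst hm; exact hPzero σ hσ
      · exact hPdiag σ m hm
    · exact hProw σ hσ δ hδ m
  intro γ k δ m
  have h := M6 hn hφ γ ε (δ + ε) k 0 m
  simp only [sub_zero] at h
  rw [hPfull ε hε (δ + ε - γ) (m - k), hPfull ε hε (δ + ε - γ) (m - k - n)] at h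
  have e1 : δ + ε - ε = δ := by abel
  rw [e1] at h
  have : (ε:ℂ) * PP φ γ k δ m = 0 := by push_cast at h; linear_combination -h
  rcases mul_eq_zero.mp this with h1 | h1
  · exact absurd h1 hε
  · exact h1


lemma hQrec (hn : n ≠ 0) (hφ : IsHalfDerivationHW n G φ) (σ δ : G) (m : ℤ) :
    (2*(σ:ℂ) - δ) * QQ φ σ 0 δ m - ((m:ℂ) - n) * QQ φ σ 0 δ (m - n)
      = (σ:ℂ) * FF φ 0 0 (δ - σ) m := by
  have h := M4 hn hφ 0 σ δ 0 0 m
  simp only [zero_add, add_zero, sub_zero, ZeroMemClass.coe_zero] at h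
  push_cast at h
  linear_combination h

lemma hFrec0 (hn : n ≠ 0) (hφ : IsHalfDerivationHW n G φ) (σ δ : G) (m : ℤ) :
    (2*(σ:ℂ) - δ) * FF φ σ 0 δ m - ((m:ℂ) - n) * FF φ σ 0 δ (m - n)
      = (2*(σ:ℂ) - δ) * FF φ 0 0 (δ - σ) m - ((m:ℂ) - n) * FF φ 0 0 (δ - σ) (m - n) := by
  have h := M1 hn hφ 0 σ δ 0 0 m
  simp only [zero_add, add_zero, sub_zero, ZeroMemClass.coe_zero] at h
  push_cast at h
  linear_combination h

lemma hIV (hn : n ≠ 0) (hφ : IsHalfDerivationHW n G φ) (σ δ : G) (m : ℤ) :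
    -(2*(σ:ℂ)) * QQ φ (σ+σ) 0 δ m
      = -(((δ:ℂ)-σ) * QQ φ σ 0 (δ-σ) m + ((m:ℂ)-n) * QQ φ σ 0 (δ-σ) (m-n))
        - (σ:ℂ) * FF φ σ 0 (δ-σ) m := by
  have h := M5 hn hφ σ σ δ 0 0 m
  simp only [zero_add, add_zero, sub_zero, ZeroMemClass.coe_zero] at h
  push_cast at h
  linear_combination h

lemma hV (hn : n ≠ 0) (hφ : IsHalfDerivationHW n G φ) (σ δ : G) (m : ℤ) :
    (σ:ℂ) * FF φ σ 0 δ m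
      = -(2*(σ:ℂ)) * QQ φ σ 0 δ m + (σ:ℂ) * FF φ 0 0 (δ - σ) m
        + 2*(σ:ℂ) * QQ φ (σ+σ) 0 (δ+σ) m := by
  have h1 := hIV hn hφ σ (δ + σ) m
  have e1 : δ + σ - σ = δ := by abel
  rw [e1] at h1
  have h2 := hQrec hn hφ σ δ m
  push_cast at h1
  linear_combination h1 + h2

lemma hVI (hn : n ≠ 0) (hφ : IsHalfDerivationHW n G φ) (σ : G) (hσ : (σ:ℂ) ≠ 0)
    (δ : G) (m : ℤ) :
    QQ φ (σ+σ) 0 (δ+σ) m = FF φ 0 0 (δ - σ) m := by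
  have hiii := hFrec0 hn hφ σ δ m
  have hv1 := hV hn hφ σ δ m
  have hv2 := hV hn hφ σ δ (m - n)
  have hi1 := hQrec hn hφ σ δ m
  have hii1 := hQrec hn hφ (σ+σ) (δ+σ) m
  have e1 : δ + σ - (σ + σ) = δ - σ := by abel
  rw [e1] at hii1
  push_cast at hii1
  have key : (2*(σ:ℂ)^2) * (QQ φ (σ+σ) 0 (δ+σ) m - FF φ 0 0 (δ - σ) m) = 0 := by
    linear_combination (-(σ:ℂ)) * hiii + (2*(σ:ℂ)-(δ:ℂ)) * hv1 - ((m:ℂ)-n) * hv2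
      - 2*(σ:ℂ) * hi1 + 2*(σ:ℂ) * hii1
  have h2 : (2*(σ:ℂ)^2) ≠ 0 := by
    intro hc
    apply hσ
    have := mul_eq_zero.mp hc
    rcases this with h | h
    · norm_num at h
    · exact pow_eq_zero_iff (by norm_num) |>.mp h
  rcases mul_eq_zero.mp key with h | h
  · exact absurd h h2
  · exact sub_eq_zero.mp h


lemma hConstr (hn : n ≠ 0) (hφ : IsHalfDerivationHW n G φ) (ε : G) (hε : (ε : ℂ) ≠ 0)
    (b : G) (m : ℤ) :
    (b:ℂ) * FF φ 0 0 b m + ((m:ℂ) - n) * FF φ 0 0 b (m - n) = 0 := by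
  have h := hQrec hn hφ (ε+ε) (b + (ε+ε)) m
  have e1 : b + (ε+ε) - (ε+ε) = b := by abel
  rw [e1] at h
  have h2 := hVI hn hφ ε hε (b + ε) m
  have h3 := hVI hn hφ ε hε (b + ε) (m - n)
  have e2 : b + ε + ε = b + (ε + ε) := by abel
  have e3 : b + ε - ε = b := by abel
  rw [e2, e3] at h2 h3
  rw [h2, h3] at h
  push_cast at h
  linear_combination -h

lemma hA (hn : n ≠ 0) (hφ : IsHalfDerivationHW n G φ) (ε : G) (hε : (ε : ℂ) ≠ 0)
    (b : G) (m : ℤ) :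
    FF φ 0 0 b m = if b = 0 ∧ m = 0 then FF φ 0 0 0 0 else 0 := by
  by_cases hb : b = 0
  · subst hb
    by_cases hm : m = 0
    · subst hm; simp
    · rw [if_neg (by tauto)]
      have h := hConstr hn hφ ε hε 0 (m + n)
      simp only [ZeroMemClass.coe_zero, zero_mul, zero_add] at h
      rw [show m + n - n = m by ring] at h
      have hm' : ((m:ℂ) + n - n) ≠ 0 := by
        push_cast
        simp only [add_sub_cancel_right]
        exact_mod_cast hm
      rcases mul_eq_zero.mp h with h1 | h1
      · exact absurd h1 (by push_cast at hm' ⊢; exact hm')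
      · exact h1
  · rw [if_neg (by tauto)]
    have hbC : (b:ℂ) ≠ 0 := by
      intro hc; apply hb; exact Subtype.ext (by simpa using hc)
    refine chain_zero_down (fun m => FF φ 0 0 b m) (row_finite _ _ (L_inj b)) hn ?_ m
    intro m' hm'
    intro hc
    have h := hConstr hn hφ ε hε b m'
    rw [hc, mul_zero, add_zero] at h
    exact hm' (by
      rcases mul_eq_zero.mp h with h1 | h1
      · exact absurd h1 hbC
      · exact h1)


lemma hQrow1 (hn : n ≠ 0) (hφ : IsHalfDerivationHW n G φ) (ε : G) (hε : (ε : ℂ) ≠ 0)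
    (σ : G) (δ : G) (hδ1 : δ ≠ σ) (hδ2 : δ ≠ σ + σ) : ∀ m, QQ φ σ 0 δ m = 0 := by
  have hAr := hA hn hφ ε hε
  refine chain_zero_down (fun m => QQ φ σ 0 δ m) (row_finite _ _ (H_inj δ)) hn ?_
  intro m hm
  intro hc
  have h := hQrec hn hφ σ δ m
  rw [hc, mul_zero, sub_zero, hAr, if_neg (by
    rintro ⟨h1, -⟩
    exact hδ1 (by rw [sub_eq_zero] at h1; exact h1)), mul_zero] at h
  have hcoef : 2*(σ:ℂ) - δ ≠ 0 := by
    intro h0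
    apply coe_ne hδ2
    push_cast
    linear_combination -h0
  exact hm (by
    rcases mul_eq_zero.mp h with h1 | h1
    · exact absurd h1 hcoef
    · exact h1)

lemma hQrow2 (hn : n ≠ 0) (hφ : IsHalfDerivationHW n G φ) (ε : G) (hε : (ε : ℂ) ≠ 0)
    (σ : G) (hσ : (σ:ℂ) ≠ 0) : ∀ m, m ≠ 0 → QQ φ σ 0 (σ + σ) m = 0 := by
  intro m hm
  have hAr := hA hn hφ ε hε
  have h := hQrec hn hφ σ (σ + σ) (m + n)
  rw [hAr, if_neg (by
    rintro ⟨h1, -⟩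
    apply hσ
    have h2 : ((σ + σ - σ : G) : ℂ) = ((0:G) : ℂ) := congrArg _ h1
    push_cast at h2
    linear_combination h2), mul_zero] at h
  have e0 : 2*(σ:ℂ) - ((σ+σ : G):ℂ) = 0 := by push_cast; ring
  rw [e0, zero_mul, show m + n - n = m by ring] at h
  have h2 : (((m + n : ℤ):ℂ) - n) * QQ φ σ 0 (σ + σ) m = 0 := by linear_combination -h
  rcases mul_eq_zero.mp h2 with h1 | h1
  · exfalso
    apply hm
    have : ((m:ℤ):ℂ) = 0 := by push_cast at h1 ⊢; linear_combination h1
    exact_mod_cast this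
  · exact h1

lemma hQrow3 (hn : n ≠ 0) (hφ : IsHalfDerivationHW n G φ) (ε : G) (hε : (ε : ℂ) ≠ 0)
    (σ : G) (hσ : (σ:ℂ) ≠ 0) :
    ∀ m, QQ φ σ 0 σ m = if m = 0 then FF φ 0 0 0 0 else 0 := by
  have hAr := hA hn hφ ε hε
  have key : ∀ m, QQ φ σ 0 σ m - (if m = 0 then FF φ 0 0 0 0 else 0) = 0 := by
    refine chain_zero_down (fun m => QQ φ σ 0 σ m - (if m = 0 then FF φ 0 0 0 0 else 0)) ?_ hn ?_
    · apply Set.Finite.subset ((row_finite (φ (Hh G σ 0)) _ (H_inj σ)).union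
        (Set.finite_singleton 0))
      intro m hm
      simp only [Set.mem_setOf_eq, Set.mem_union, Set.mem_singleton_iff] at hm ⊢
      by_cases h0 : m = 0
      · exact Or.inr h0
      · left
        rw [if_neg h0, sub_zero] at hm
        exact hm
    · intro m hm
      intro hc
      apply hm
      have h := hQrec hn hφ σ σ m
      rw [hAr] at h
      have e1 : (σ - σ : G) = 0 := by abel
      rw [e1] at h
      simp only [eq_self_iff_true, true_and] at h
      have hzero : ((m:ℂ) - n) * (if m - n = 0 then FF φ 0 0 0 0 else 0) = 0 := by
        by_cases hmn : m - n = 0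
        · rw [if_pos hmn]
          have : ((m:ℂ) - n) = 0 := by
            have := congrArg (fun t : ℤ => (t:ℂ)) hmn
            push_cast at this
            linear_combination this
          rw [this, zero_mul]
        · rw [if_neg hmn, mul_zero]
      have hD : (σ:ℂ) * (QQ φ σ 0 σ m - (if m = 0 then FF φ 0 0 0 0 else 0))
          = ((m:ℂ) - n) * (QQ φ σ 0 σ (m-n) - (if m - n = 0 then FF φ 0 0 0 0 else 0)) := by
        linear_combination h + hzero
      rw [hc, mul_zero] at hD
      rcases mul_eq_zero.mp hD with h1 | h1
      · exact absurd h1 hσ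
      · exact h1
  intro m
  linear_combination key m


lemma hFQ (hn : n ≠ 0) (hφ : IsHalfDerivationHW n G φ) (σ : G) (hσ : (σ:ℂ) ≠ 0)
    (δ : G) (m : ℤ) :
    FF φ σ 0 δ m = 3 * FF φ 0 0 (δ - σ) m - 2 * QQ φ σ 0 δ m := by
  have h1 := hV hn hφ σ δ m
  have h2 := hVI hn hφ σ hσ δ m
  have key : (σ:ℂ) * (FF φ σ 0 δ m - (3 * FF φ 0 0 (δ - σ) m - 2 * QQ φ σ 0 δ m)) = 0 := by
    linear_combination h1 + 2*(σ:ℂ) * h2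
  rcases mul_eq_zero.mp key with h | h
  · exact absurd h hσ
  · exact sub_eq_zero.mp h

lemma ne_of_coe {a b : G} (h : (a:ℂ) ≠ (b:ℂ)) : a ≠ b := fun hc => h (by rw [hc])

lemma hmu (hn : n ≠ 0) (hφ : IsHalfDerivationHW n G φ) (ε : G) (hε : (ε : ℂ) ≠ 0)
    (σ : G) (hσ : (σ:ℂ) ≠ 0) : QQ φ σ 0 (σ + σ) 0 = 0 := by
  have hAr := hA hn hφ ε hε
  have hnσ : ((-σ : G):ℂ) ≠ 0 := by
    push_cast
    simpa using hσ
  have hz1 : (0:G) ≠ -σ := ne_of_coe (by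
    push_cast
    intro hc
    exact hσ (by linear_combination hc))
  have hz2 : (0:G) ≠ -σ + -σ := ne_of_coe (by
    push_cast
    intro hc
    exact hσ (by linear_combination hc/2))
  have h := M1 hn hφ σ (-σ) σ 0 0 0
  have e1 : σ + -σ = (0:G) := by abel
  have e2 : σ - (-σ) = σ + σ := by abel
  have e3 : σ - σ = (0:G) := by abel
  rw [e1, e2, e3] at h
  simp only [add_zero, zero_add, sub_zero, zero_sub] at h
  have hσne : ¬ (σ = (0:G)) := ne_of_coe (by simpa using hσ)
  have e4 : σ + σ - σ = σ := by abel
  have e5 : (0:G) - (-σ) = σ := by abel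
  have v1 : FF φ 0 0 σ 0 = 0 := by
    rw [hAr, if_neg (by rintro ⟨h1, -⟩; exact hσne h1)]
  have v2 : FF φ σ 0 (σ + σ) 0 = -2 * QQ φ σ 0 (σ + σ) 0 := by
    rw [hFQ hn hφ σ hσ, e4, hAr, if_neg (by rintro ⟨h1, -⟩; exact hσne h1)]
    ring
  have v3 : FF φ σ 0 (σ + σ) (-n) = 0 := by
    rw [hFQ hn hφ σ hσ, e4, hAr, if_neg (by rintro ⟨h1, -⟩; exact hσne h1),
      hQrow2 hn hφ ε hε σ hσ _ (by omega)]
    ring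
  have v4 : FF φ (-σ) 0 0 0 = 0 := by
    rw [hFQ hn hφ (-σ) hnσ, e5, hAr, if_neg (by rintro ⟨h1, -⟩; exact hσne h1),
      hQrow1 hn hφ ε hε (-σ) 0 hz1 hz2]
    ring
  have v5 : FF φ (-σ) 0 0 (-n) = 0 := by
    rw [hFQ hn hφ (-σ) hnσ, e5, hAr, if_neg (by rintro ⟨h1, -⟩; exact hσne h1),
      hQrow1 hn hφ ε hε (-σ) 0 hz1 hz2]
    ring
  rw [v1, v2, v3, v4, v5] at h
  have h6 : (6*(σ:ℂ)) * QQ φ σ 0 (σ + σ) 0 = 0 := by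
    push_cast at h
    linear_combination -h
  rcases mul_eq_zero.mp h6 with h1 | h1
  · exfalso; apply hσ; linear_combination h1/6
  · exact h1

lemma hFrow (hn : n ≠ 0) (hφ : IsHalfDerivationHW n G φ) (ε : G) (hε : (ε : ℂ) ≠ 0)
    (σ : G) (δ : G) (m : ℤ) :
    FF φ σ 0 δ m = if δ = σ ∧ m = 0 then FF φ 0 0 0 0 else 0 := by
  have hAr := hA hn hφ ε hε
  by_cases hσ0 : (σ:ℂ) = 0
  · have : σ = (0:G) := Subtype.ext (by simpa using hσ0)
    subst this
    rw [hAr]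
  · have hσ : (σ:ℂ) ≠ 0 := hσ0
    have hσne : ¬ (σ = (0:G)) := ne_of_coe (by simpa using hσ)
    rw [hFQ hn hφ σ hσ]
    by_cases h1 : δ = σ
    · have h1' : σ = δ := h1.symm
      subst h1'
      have e0 : σ - σ = (0:G) := by abel
      rw [e0, hAr, hQrow3 hn hφ ε hε σ hσ m]
      by_cases hm : m = 0
      · rw [if_pos ⟨rfl, hm⟩, if_pos hm, if_pos ⟨rfl, hm⟩]
        ring
      · rw [if_neg (by tauto), if_neg hm, if_neg (by tauto)]
        ring
    · by_cases h2 : δ = σ + σ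
      · subst h2
        have e4 : σ + σ - σ = σ := by abel
        rw [e4, hAr, if_neg (by rintro ⟨hh, -⟩; exact hσne hh),
          if_neg (by rintro ⟨hh, -⟩; exact h1 hh)]
        by_cases hm : m = 0
        · subst hm
          rw [hmu hn hφ ε hε σ hσ]
          ring
        · rw [hQrow2 hn hφ ε hε σ hσ m hm]
          ring
      · rw [hQrow1 hn hφ ε hε σ δ h1 h2 m, hAr,
          if_neg (by rintro ⟨hh, -⟩; exact h1 (by rw [sub_eq_zero] at hh; exact hh)),
          if_neg (by rintro ⟨hh, -⟩; exact h1 hh)]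
        ring


noncomputable def EE (φ : HWnG G →ₗ[ℂ] HWnG G) (γ : G) (k : ℤ) (δ : G) (m : ℤ) : ℂ :=
  FF φ γ k δ m - (if δ = γ ∧ m = k then FF φ 0 0 0 0 else 0)

lemma hHOM1 (hn : n ≠ 0) (hφ : IsHalfDerivationHW n G φ) (ε : G) (hε : (ε : ℂ) ≠ 0)
    (γ : G) (k : ℤ) (δ : G) (m : ℤ) :
    (2*(γ:ℂ)-δ) * EE φ γ k δ m - ((m:ℂ)-n) * EE φ γ k δ (m-n)
      + 2*(k:ℂ) * EE φ γ (k+n) δ m = 0 := by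
  classical
  have hAr := hA hn hφ ε hε
  have h := M1 hn hφ 0 γ δ 0 k m
  simp only [zero_add, add_zero, sub_zero, ZeroMemClass.coe_zero] at h
  rw [hAr (δ - γ) (m - k), hAr (δ - γ) (m - k - n)] at h
  simp only [EE]
  by_cases hd : δ = γ
  · simp only [hd, sub_self, eq_self_iff_true, true_and] at h ⊢
    split_ifs at h ⊢ <;> first | linear_combination h | (exfalso; omega)
  · have hd2 : (δ = γ) = False := eq_false hd
    have hd1 : (δ - γ = 0) = False := eq_false (fun hc => hd (sub_eq_zero.mp hc))
    simp only [hd1, hd2, false_and, if_false] at h ⊢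
    linear_combination h

lemma hHOM2 (hn : n ≠ 0) (hφ : IsHalfDerivationHW n G φ) (ε : G) (hε : (ε : ℂ) ≠ 0)
    (σ : G) (γ : G) (k : ℤ) (δ : G) (m : ℤ) :
    2*((γ:ℂ)-2*σ) * EE φ γ k δ m + 2*(k:ℂ) * EE φ γ (k+n) δ m
      - ((δ:ℂ)-2*σ) * EE φ (γ-σ) k (δ-σ) m - ((m:ℂ)-n) * EE φ (γ-σ) k (δ-σ) (m-n) = 0 := by
  classical
  have hFr := hFrow hn hφ ε hε σ
  have h := M1 hn hφ σ (γ - σ) δ 0 k m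
  have e1 : σ + (γ - σ) = γ := by abel
  rw [e1] at h
  simp only [zero_add, add_zero, sub_zero] at h
  rw [hFr (δ - (γ - σ)) (m - k), hFr (δ - (γ - σ)) (m - k - n)] at h
  simp only [EE]
  by_cases hd : δ = γ
  · have ea : γ - (γ - σ) = σ := by abel
    simp only [hd, ea, sub_self, eq_self_iff_true, true_and] at h ⊢
    push_cast at h ⊢
    split_ifs at h ⊢ <;> first | linear_combination h | (exfalso; omega)
  · have hd2 : (δ = γ) = False := eq_false hd
    have hd1 : (δ - (γ - σ) = σ) = False := eq_false (fun hc => hd (by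
      have h2 := sub_eq_iff_eq_add.mp hc
      rw [h2]; abel))
    have hd3 : (δ - σ = γ - σ) = False := eq_false (fun hc => hd (by
      have h2 := sub_left_inj.mp hc
      exact h2))
    simp only [hd1, hd2, hd3, false_and, if_false] at h ⊢
    push_cast at h ⊢
    linear_combination h

lemma hREL (hn : n ≠ 0) (hφ : IsHalfDerivationHW n G φ) (ε : G) (hε : (ε : ℂ) ≠ 0)
    (σ : G) (γ : G) (k : ℤ) (δ : G) (m : ℤ) :
    ((δ:ℂ)-4*σ) * EE φ γ k δ m + ((m:ℂ)-n) * EE φ γ k δ (m-n)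
      - ((δ:ℂ)-2*σ) * EE φ (γ-σ) k (δ-σ) m - ((m:ℂ)-n) * EE φ (γ-σ) k (δ-σ) (m-n) = 0 := by
  linear_combination hHOM2 hn hφ ε hε σ γ k δ m - hHOM1 hn hφ ε hε γ k δ m

lemma hTR (hn : n ≠ 0) (hφ : IsHalfDerivationHW n G φ) (ε : G) (hε : (ε : ℂ) ≠ 0)
    (σ : G) (hσ : (σ:ℂ) ≠ 0) (γ : G) (k : ℤ) (δ : G) (m : ℤ) :
    EE φ (γ-σ) k (δ-σ) m = EE φ γ k δ m := by
  have r1 := hREL hn hφ ε hε σ γ k δ m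
  have r2 := hREL hn hφ ε hε (-σ) (γ-σ) k (δ-σ) m
  have e1 : γ - σ - (-σ) = γ := by abel
  have e2 : δ - σ - (-σ) = δ := by abel
  rw [e1, e2] at r2
  push_cast at r2
  have key : (5*(σ:ℂ)) * (EE φ (γ-σ) k (δ-σ) m - EE φ γ k δ m) = 0 := by
    linear_combination r1 + r2
  rcases mul_eq_zero.mp key with h | h
  · exfalso; exact hσ (by linear_combination h/5)
  · exact sub_eq_zero.mp h

lemma hFgen (hn : n ≠ 0) (hφ : IsHalfDerivationHW n G φ) (ε : G) (hε : (ε : ℂ) ≠ 0)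
    (γ : G) (k : ℤ) (δ : G) (m : ℤ) :
    FF φ γ k δ m = if δ = γ ∧ m = k then FF φ 0 0 0 0 else 0 := by
  have hEz : EE φ γ k δ m = 0 := by
    have r1 := hREL hn hφ ε hε ε γ k δ m
    have t1 := hTR hn hφ ε hε ε hε γ k δ m
    have t2 := hTR hn hφ ε hε ε hε γ k δ (m-n)
    rw [t1, t2] at r1
    have key : (2*(ε:ℂ)) * EE φ γ k δ m = 0 := by linear_combination -r1
    rcases mul_eq_zero.mp key with h | h
    · exfalso; exact hε (by linear_combination h/2)
    · exact h
  have := hEz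
  simp only [EE] at this
  linear_combination this


lemma hQ0row (hn : n ≠ 0) (hφ : IsHalfDerivationHW n G φ) (ε : G) (hε : (ε : ℂ) ≠ 0)
    (σ : G) (hσ : (σ:ℂ) ≠ 0) (δ : G) (m : ℤ) :
    QQ φ σ 0 δ m = if δ = σ ∧ m = 0 then FF φ 0 0 0 0 else 0 := by
  have hσne : σ ≠ (0:G) := ne_of_coe (by simpa using hσ)
  by_cases h1 : δ = σ
  · have h1' : σ = δ := h1.symm
    subst h1'
    rw [hQrow3 hn hφ ε hε σ hσ m]
    by_cases hm : m = 0
    · rw [if_pos hm, if_pos ⟨rfl, hm⟩]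
    · rw [if_neg hm, if_neg (by tauto)]
  · rw [if_neg (by tauto)]
    by_cases h2 : δ = σ + σ
    · subst h2
      by_cases hm : m = 0
      · subst hm
        exact hmu hn hφ ε hε σ hσ
      · exact hQrow2 hn hφ ε hε σ hσ m hm
    · exact hQrow1 hn hφ ε hε σ δ h1 h2 m

lemma hQgen (hn : n ≠ 0) (hφ : IsHalfDerivationHW n G φ) (ε : G) (hε : (ε : ℂ) ≠ 0)
    (γ : G) (k : ℤ) (δ : G) (m : ℤ) :
    QQ φ γ k δ m = if δ = γ ∧ m = k then FF φ 0 0 0 0 else 0 := by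
  classical
  have hQ0r := hQ0row hn hφ ε hε ε hε
  have h := M5 hn hφ ε (γ-ε) δ 0 k m
  have e1 : γ - ε + ε = γ := by abel
  rw [e1] at h
  simp only [add_zero, sub_zero] at h
  rw [hQ0r (δ - (γ-ε)) (m-k), hQ0r (δ - (γ-ε)) (m-k-n),
    hFgen hn hφ ε hε (γ-ε) k (δ-ε) m] at h
  by_cases hd : δ = γ
  · have ea : γ - (γ - ε) = ε := by abel
    simp only [hd, ea, eq_self_iff_true, true_and] at h ⊢
    have hv : ((m:ℂ)-k-n) * (if m-k-n = 0 then FF φ 0 0 0 0 else 0) = 0 := by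
      by_cases hz : m-k-n = 0
      · rw [if_pos hz]
        have hzc : ((m:ℂ)-k-n) = 0 := by
          have := congrArg (fun t : ℤ => (t:ℂ)) hz
          push_cast at this
          linear_combination this
        rw [hzc, zero_mul]
      · rw [if_neg hz, mul_zero]
    rw [hv] at h
    push_cast at h
    by_cases hmk : m = k
    · rw [if_pos (show m - k = 0 by omega), if_pos hmk] at h
      rw [if_pos hmk]
      have key : (2*(ε:ℂ)) * (QQ φ γ k γ m - FF φ 0 0 0 0) = 0 := by linear_combination -h
      rcases mul_eq_zero.mp key with hx | hx
      · exact absurd (by linear_combination hx/2 : (ε:ℂ) = 0) hε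
      · exact sub_eq_zero.mp hx
    · rw [if_neg (show ¬ (m - k = 0) by omega), if_neg hmk] at h
      rw [if_neg hmk]
      have key : (2*(ε:ℂ)) * QQ φ γ k γ m = 0 := by linear_combination -h
      rcases mul_eq_zero.mp key with hx | hx
      · exact absurd (by linear_combination hx/2 : (ε:ℂ) = 0) hε
      · exact hx
  · have hd1 : (δ - (γ - ε) = ε) = False := eq_false (fun hc => hd (by
      have h2 := sub_eq_iff_eq_add.mp hc
      rw [h2]; abel))
    have hd3 : (δ - ε = γ - ε) = False := eq_false (fun hc => hd (sub_left_inj.mp hc))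
    have hd2 : (δ = γ) = False := eq_false hd
    simp only [hd1, hd2, hd3, false_and, if_false] at h ⊢
    push_cast at h
    have key : (2*(ε:ℂ)) * QQ φ γ k δ m = 0 := by linear_combination -h
    rcases mul_eq_zero.mp key with hx | hx
    · exact absurd (by linear_combination hx/2 : (ε:ℂ) = 0) hε
    · exact hx


lemma hWrec (hn : n ≠ 0) (hφ : IsHalfDerivationHW n G φ) (β δ : G) (j m : ℤ) :
    (2*(β:ℂ)-δ) * WW φ β j δ m - ((m:ℂ)-n) * WW φ β j δ (m-n) + 2*(j:ℂ) * WW φ β (j+n) δ m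
      = -(((δ:ℂ)-β) * WW φ 0 0 (δ-β) (m-j) + ((m:ℂ)-j-n) * WW φ 0 0 (δ-β) (m-j-n)) := by
  have h := M2 hn hφ 0 β δ 0 j m
  simp only [zero_add, add_zero, sub_zero, ZeroMemClass.coe_zero] at h
  linear_combination h

lemma h_iW (hn : n ≠ 0) (hφ : IsHalfDerivationHW n G φ) (σ δ : G) (m : ℤ) :
    (2*(σ:ℂ)-δ) * WW φ σ 0 δ m - ((m:ℂ)-n) * WW φ σ 0 δ (m-n)
      = -(((δ:ℂ)-σ) * WW φ 0 0 (δ-σ) m + ((m:ℂ)-n) * WW φ 0 0 (δ-σ) (m-n)) := by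
  have h := hWrec hn hφ σ δ 0 m
  simp only [sub_zero, zero_add] at h
  push_cast at h
  linear_combination h

lemma hWpair (hn : n ≠ 0) (hφ : IsHalfDerivationHW n G φ) (σ δ : G) (m : ℤ) :
    -(4*(σ:ℂ)) * WW φ 0 0 δ m
      = -(((δ:ℂ)+σ) * WW φ σ 0 (δ+σ) m + ((m:ℂ)-n) * WW φ σ 0 (δ+σ) (m-n))
        + ((δ:ℂ)-σ) * WW φ (-σ) 0 (δ-σ) m + ((m:ℂ)-n) * WW φ (-σ) 0 (δ-σ) (m-n) := by
  have h := M2 hn hφ σ (-σ) δ 0 0 m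
  have e1 : σ + -σ = (0:G) := by abel
  have e2 : δ - -σ = δ + σ := by
    rw [sub_neg_eq_add]
  rw [e1, e2] at h
  simp only [add_zero, sub_zero] at h
  push_cast at h
  linear_combination h

lemma hWsum (hn : n ≠ 0) (hφ : IsHalfDerivationHW n G φ) (σ : G) (hσ : (σ:ℂ) ≠ 0)
    (δ : G) (m : ℤ) :
    2 * WW φ 0 0 δ m = WW φ σ 0 (δ+σ) m + WW φ (-σ) 0 (δ-σ) m := by
  have a := h_iW hn hφ σ (δ+σ) m
  have b := h_iW hn hφ (-σ) (δ-σ) m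
  have e1 : δ + σ - σ = δ := by abel
  have e2 : δ - σ - -σ = δ := by abel
  rw [e1] at a
  rw [e2] at b
  push_cast at a b
  have pair := hWpair hn hφ σ δ m
  have key : (2*(σ:ℂ)) * (2 * WW φ 0 0 δ m - WW φ σ 0 (δ+σ) m - WW φ (-σ) 0 (δ-σ) m) = 0 := by
    linear_combination -pair - a + b
  rcases mul_eq_zero.mp key with hx | hx
  · exact absurd (by linear_combination hx/2 : (σ:ℂ) = 0) hσ
  · linear_combination hx

lemma hWTI (hn : n ≠ 0) (hφ : IsHalfDerivationHW n G φ) (σ : G) (hσ : (σ:ℂ) ≠ 0)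
    (δ : G) (m : ℤ) :
    WW φ σ 0 (δ+σ) m = WW φ 0 0 δ m := by
  have a := h_iW hn hφ σ (δ+σ) m
  have b := h_iW hn hφ (-σ) (δ-σ) m
  have e1 : δ + σ - σ = δ := by abel
  have e2 : δ - σ - -σ = δ := by abel
  rw [e1] at a
  rw [e2] at b
  push_cast at a b
  have s1 := hWsum hn hφ σ hσ δ m
  have s2 := hWsum hn hφ σ hσ δ (m-n)
  have key : (2*(σ:ℂ)) * (WW φ σ 0 (δ+σ) m - WW φ 0 0 δ m) = 0 := by
    linear_combination a + b - ((σ:ℂ)+δ) * s1 - ((m:ℂ)-n) * s2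
  rcases mul_eq_zero.mp key with hx | hx
  · exact absurd (by linear_combination hx/2 : (σ:ℂ) = 0) hσ
  · exact sub_eq_zero.mp hx

lemma hWzero0 (hn : n ≠ 0) (hφ : IsHalfDerivationHW n G φ) (ε : G) (hε : (ε : ℂ) ≠ 0)
    (δ : G) (m : ℤ) : WW φ 0 0 δ m = 0 := by
  have a := h_iW hn hφ ε (δ+ε) m
  have e1 : δ + ε - ε = δ := by abel
  rw [e1, hWTI hn hφ ε hε δ m, hWTI hn hφ ε hε δ (m-n)] at a
  push_cast at a
  have key : (ε:ℂ) * WW φ 0 0 δ m = 0 := by linear_combination a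
  rcases mul_eq_zero.mp key with hx | hx
  · exact absurd hx hε
  · exact hx

lemma hWσ0 (hn : n ≠ 0) (hφ : IsHalfDerivationHW n G φ) (ε : G) (hε : (ε : ℂ) ≠ 0)
    (σ : G) (δ : G) (m : ℤ) : WW φ σ 0 δ m = 0 := by
  by_cases hσ : (σ:ℂ) = 0
  · have : σ = (0:G) := Subtype.ext (by simpa using hσ)
    subst this
    exact hWzero0 hn hφ ε hε δ m
  · have h := hWTI hn hφ σ hσ (δ - σ) m
    have e1 : δ - σ + σ = δ := by abel
    rw [e1, hWzero0 hn hφ ε hε (δ - σ) m] at h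
    exact h

lemma hRELW (hn : n ≠ 0) (hφ : IsHalfDerivationHW n G φ) (ε : G) (hε : (ε : ℂ) ≠ 0)
    (σ γ : G) (k : ℤ) (δ : G) (m : ℤ) :
    ((δ:ℂ)-4*σ) * WW φ γ k δ m + ((m:ℂ)-n) * WW φ γ k δ (m-n)
      = ((δ:ℂ)-σ) * WW φ (γ-σ) k (δ-σ) m + ((m:ℂ)-n) * WW φ (γ-σ) k (δ-σ) (m-n) := by
  have h := M2 hn hφ σ (γ-σ) δ 0 k m
  have e1 : σ + (γ - σ) = γ := by abel
  rw [e1] at h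
  simp only [zero_add, add_zero, sub_zero] at h
  rw [hWσ0 hn hφ ε hε σ (δ - (γ - σ)) (m-k), hWσ0 hn hφ ε hε σ (δ - (γ - σ)) (m-k-n)] at h
  have hr := hWrec hn hφ γ δ k m
  rw [hWzero0 hn hφ ε hε (δ-γ) (m-k), hWzero0 hn hφ ε hε (δ-γ) (m-k-n)] at hr
  push_cast at h hr
  linear_combination h - hr

lemma hWgen (hn : n ≠ 0) (hφ : IsHalfDerivationHW n G φ) (ε : G) (hε : (ε : ℂ) ≠ 0)
    (γ : G) (k : ℤ) (δ : G) (m : ℤ) : WW φ γ k δ m = 0 := by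
  have r1 := hRELW hn hφ ε hε ε γ k δ m
  have r2 := hRELW hn hφ ε hε (-ε) (γ-ε) k (δ-ε) m
  have e1 : γ - ε - -ε = γ := by abel
  have e2 : δ - ε - -ε = δ := by abel
  rw [e1, e2] at r2
  push_cast at r2
  have tr : WW φ (γ-ε) k (δ-ε) m = WW φ γ k δ m := by
    have key : (4*(ε:ℂ)) * (WW φ (γ-ε) k (δ-ε) m - WW φ γ k δ m) = 0 := by
      linear_combination r1 + r2
    rcases mul_eq_zero.mp key with hx | hx
    · exact absurd (by linear_combination hx/4 : (ε:ℂ) = 0) hε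
    · exact sub_eq_zero.mp hx
  have tr' : WW φ (γ-ε) k (δ-ε) (m-n) = WW φ γ k δ (m-n) := by
    have r1' := hRELW hn hφ ε hε ε γ k δ (m-n)
    have r2' := hRELW hn hφ ε hε (-ε) (γ-ε) k (δ-ε) (m-n)
    rw [e1, e2] at r2'
    push_cast at r1' r2'
    have key : (4*(ε:ℂ)) * (WW φ (γ-ε) k (δ-ε) (m-n) - WW φ γ k δ (m-n)) = 0 := by
      linear_combination r1' + r2'
    rcases mul_eq_zero.mp key with hx | hx
    · exact absurd (by linear_combination hx/4 : (ε:ℂ) = 0) hε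
    · exact sub_eq_zero.mp hx
  rw [tr, tr'] at r1
  have key : (3*(ε:ℂ)) * WW φ γ k δ m = 0 := by linear_combination -r1
  rcases mul_eq_zero.mp key with hx | hx
  · exact absurd (by linear_combination hx/3 : (ε:ℂ) = 0) hε
  · exact hx


lemma key_L (hn : n ≠ 0) (hφ : IsHalfDerivationHW n G φ) (ε : G) (hε : (ε : ℂ) ≠ 0)
    (α : G) (i : ℤ) :
    φ (Lh G α i) = FF φ 0 0 0 0 • Lh G α i := by
  classical
  ext b
  rcases b with ⟨δ, m⟩ | ⟨δ, m⟩
  · have h := hFgen hn hφ ε hε α i δ m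
    rw [show (φ (Lh G α i)) (HWBasis.L δ m) = FF φ α i δ m from rfl, h]
    simp only [Finsupp.smul_apply, Lh, Finsupp.single_apply, smul_eq_mul, HWBasis.L.injEq]
    by_cases h1 : δ = α
    · by_cases h2 : m = i
      · simp [h1, h2]
      · simp only [h1, h2, eq_self_iff_true, true_and, and_false, if_false]
        rw [if_neg (fun hc : i = m => h2 hc.symm)]
        ring
    · simp only [h1, false_and, if_false]
      rw [if_neg (fun hc => h1 (hc.1.symm))]
      ring
  · have h := hWgen hn hφ ε hε α i δ m
    rw [show (φ (Lh G α i)) (HWBasis.H δ m) = WW φ α i δ m from rfl, h]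
    simp [Lh, Finsupp.single_apply]

lemma key_H (hn : n ≠ 0) (hφ : IsHalfDerivationHW n G φ) (ε : G) (hε : (ε : ℂ) ≠ 0)
    (α : G) (i : ℤ) :
    φ (Hh G α i) = FF φ 0 0 0 0 • Hh G α i := by
  classical
  ext b
  rcases b with ⟨δ, m⟩ | ⟨δ, m⟩
  · have h := step_P hn hφ ε hε α i δ m
    rw [show (φ (Hh G α i)) (HWBasis.L δ m) = PP φ α i δ m from rfl, h]
    simp [Hh, Finsupp.single_apply]
  · have h := hQgen hn hφ ε hε α i δ m
    rw [show (φ (Hh G α i)) (HWBasis.H δ m) = QQ φ α i δ m from rfl, h]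
    simp only [Finsupp.smul_apply, Hh, Finsupp.single_apply, smul_eq_mul, HWBasis.H.injEq]
    by_cases h1 : δ = α
    · by_cases h2 : m = i
      · simp [h1, h2]
      · simp only [h1, h2, eq_self_iff_true, true_and, and_false, if_false]
        rw [if_neg (fun hc : i = m => h2 hc.symm)]
        ring
    · simp only [h1, false_and, if_false]
      rw [if_neg (fun hc => h1 (hc.1.symm))]
      ring

end Stmt15Aux

/-- for n ≠ 0, every ½-derivation of HW_n(G) is given by a finitely
supported function a : G × ℤ → ℂ satisfying d·a(d,k) + (k−n)·a(d,k−n) = 0, via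
φ(L_{α,i}) = Σ a(d,k)·L_{α+d,i+k} and φ(H_{α,i}) = Σ a(d,k)·H_{α+d,i+k}. -/
theorem stmt15 (n : ℤ) (hn : n ≠ 0) (G : AddSubgroup ℂ) (hG : G ≠ ⊥)
    (φ : HWnG G →ₗ[ℂ] HWnG G) (hφ : IsHalfDerivationHW n G φ) :
    ∃ a : (↥G × ℤ) →₀ ℂ,
      (∀ (d : ↥G) (k : ℤ),
        (d : ℂ) * a (d, k) + ((k : ℂ) - (n : ℂ)) * a (d, k - n) = 0) ∧
      (∀ (α : ↥G) (i : ℤ),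
        φ (Lh G α i) = a.sum fun p c => c • Lh G (α + p.1) (i + p.2)) ∧
      (∀ (α : ↥G) (i : ℤ),
        φ (Hh G α i) = a.sum fun p c => c • Hh G (α + p.1) (i + p.2)) := by
  classical
  obtain ⟨ε, hε⟩ := Stmt15Aux.exists_ne_zero hG
  set c : ℂ := Stmt15Aux.FF φ 0 0 0 0 with hc
  refine ⟨Finsupp.single ((0:G), (0:ℤ)) c, ?_, ?_, ?_⟩
  · intro d k
    rw [Finsupp.single_apply, Finsupp.single_apply]
    by_cases h1 : ((0:G), (0:ℤ)) = (d, k)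
    · obtain ⟨hd, hk⟩ := Prod.mk.injEq _ _ _ _ ▸ h1
      rw [if_pos h1, if_neg (by
        intro hc2
        have hk2 : (0:ℤ) = k - n := (Prod.mk.injEq _ _ _ _ ▸ hc2).2
        omega)]
      rw [← hd]
      push_cast
      ring
    · rw [if_neg h1]
      by_cases h2 : ((0:G), (0:ℤ)) = (d, k - n)
      · obtain ⟨hd, hk⟩ := Prod.mk.injEq _ _ _ _ ▸ h2
        rw [if_pos h2]
        have : ((k:ℂ) - n) = 0 := by
          have : k = n := by omega
          rw [this]; ring
        rw [this]
        ring
      · rw [if_neg h2]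
        ring
  · intro α i
    rw [Finsupp.sum_single_index (by rw [zero_smul])]
    simp only [add_zero]
    exact Stmt15Aux.key_L hn hφ ε hε α i
  · intro α i
    rw [Finsupp.sum_single_index (by rw [zero_smul])]
    simp only [add_zero]
    exact Stmt15Aux.key_H hn hφ ε hε α i
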